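/- arXiv:2003.13438 — 5 statements merged into one kernel-verified Lean document; each statement's English description precedes it below -/
import Mathlib

section
/- Let n ∈ ℕ, let H̄ be an n×n real symmetric positive-definite matrix whose smallest eigenvalue is p > 0, let t > 0, and let ΔH̄ : ℝ → (n×n real matrices) be continuous on [0,t]. Suppose η : ℝ → ℝⁿ is differentiable and satisfies η′(τ) = −(H̄ + ΔH̄(τ)) η(τ) for all τ ∈ [0,t], and set q := (sup_{τ∈[0,t]} ‖ΔH̄(τ)‖_op)/p. If q < 1, then ∫₀ᵗ ‖η(τ)‖ dτ ≤ ‖η(0)‖ / (p(1−q)). -/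
/-! Along the flow, `d/dτ ‖η‖² = -2⟪(H + ΔH τ) η, η⟫ ≤ -2 (p - sup ‖ΔH‖) ‖η‖² = -2 p (1 - q) ‖η‖²`,
because the Rayleigh quotient of `H` is at least its smallest eigenvalue `p`. Grönwall's
inequality then gives `‖η τ‖ ≤ ‖η 0‖ e^{-p(1-q)τ}`, whose integral over `[0, t]` is at most
`‖η 0‖ / (p (1 - q))`. -/

/-- The spectral norm (largest singular value) of a real matrix, i.e. the operator
norm of the induced map between Euclidean spaces. -/
noncomputable def opNorm {ι κ : Type*} [Fintype ι] [Fintype κ] [DecidableEq κ]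
    (A : Matrix ι κ ℝ) : ℝ :=
  ‖LinearMap.toContinuousLinearMap (Matrix.toEuclideanLin A)‖

open Set Real
open scoped RealInnerProductSpace

theorem IsCompact.le_biSup_of_continuousOn {α β : Type*} [TopologicalSpace α]
    [ConditionallyCompleteLinearOrder β] [TopologicalSpace β] [OrderTopology β]
    {s : Set α} {f : α → β} (hs : IsCompact s) (hf : ContinuousOn f s) {x : α} (hx : x ∈ s) :
    f x ≤ ⨆ y ∈ s, f y := by
  obtain ⟨B, hB⟩ := hs.bddAbove_image hf
  refine le_ciSup₂ (f := fun y (_ : y ∈ s) => f y) ⟨B, ?_⟩ x hx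
  simp only [mem_upperBounds, mem_iUnion, mem_range] at hB ⊢
  rintro _ ⟨y, hy, rfl⟩
  exact hB _ ⟨y, hy, rfl⟩

section opNorm

variable {ι κ : Type*} [Fintype ι] [Fintype κ] [DecidableEq κ]

theorem continuous_opNorm : Continuous (opNorm : Matrix ι κ ℝ → ℝ) := by
  let L : Matrix ι κ ℝ ≃ₗ[ℝ] (EuclideanSpace ℝ κ →L[ℝ] EuclideanSpace ℝ ι) :=
    Matrix.toEuclideanLin.trans LinearMap.toContinuousLinearMap
  exact continuous_norm.comp L.toLinearMap.continuous_of_finiteDimensional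

theorem norm_toEuclideanLin_apply_le (A : Matrix ι κ ℝ) (x : EuclideanSpace ℝ κ) :
    ‖Matrix.toEuclideanLin A x‖ ≤ opNorm A * ‖x‖ :=
  (LinearMap.toContinuousLinearMap (Matrix.toEuclideanLin A)).le_opNorm x

end opNorm

section coercive

variable {ι : Type*} [Fintype ι] [DecidableEq ι]

theorem Matrix.IsHermitian.mul_norm_sq_le_inner_toEuclideanLin {H : Matrix ι ι ℝ}
    (hH : H.IsHermitian) {p : ℝ} (hp : ∀ i, p ≤ hH.eigenvalues i) (x : EuclideanSpace ℝ ι) :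
    p * ‖x‖ ^ 2 ≤ ⟪Matrix.toEuclideanLin H x, x⟫ := by
  set b := hH.eigenvectorBasis
  have hb : ∀ i, Matrix.toEuclideanLin H (b i) = hH.eigenvalues i • b i := fun i => by
    simpa [Matrix.toLpLin_apply] using congrArg (WithLp.toLp 2) (hH.mulVec_eigenvectorBasis i)
  have hHx : ⟪Matrix.toEuclideanLin H x, x⟫ = ∑ i, hH.eigenvalues i * ⟪b i, x⟫ ^ 2 := by
    nth_rewrite 1 [← b.sum_repr' x]
    simp only [map_sum, map_smul, hb, sum_inner, smul_smul, real_inner_smul_left]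
    exact Finset.sum_congr rfl fun i _ => by ring
  have hx : ‖x‖ ^ 2 = ∑ i, ⟪b i, x⟫ ^ 2 := by
    simp only [← b.sum_sq_norm_inner_right x, Real.norm_eq_abs, sq_abs]
  rw [hHx, hx, Finset.mul_sum]
  gcongr with i
  exact hp i

theorem Matrix.IsHermitian.sub_opNorm_mul_norm_sq_le_inner {H : Matrix ι ι ℝ}
    (hH : H.IsHermitian) {p : ℝ} (hp : ∀ i, p ≤ hH.eigenvalues i) (A : Matrix ι ι ℝ)
    (x : EuclideanSpace ℝ ι) :
    (p - opNorm A) * ‖x‖ ^ 2 ≤ ⟪Matrix.toEuclideanLin (H + A) x, x⟫ := by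
  have hA : -(opNorm A * ‖x‖ ^ 2) ≤ ⟪Matrix.toEuclideanLin A x, x⟫ := by
    refine neg_le_of_abs_le ((abs_real_inner_le_norm _ _).trans ?_)
    rw [sq, ← mul_assoc]
    exact mul_le_mul_of_nonneg_right (norm_toEuclideanLin_apply_le A x) (norm_nonneg x)
  rw [map_add, LinearMap.add_apply, inner_add_left]
  linarith [hH.mul_norm_sq_le_inner_toEuclideanLin hp x]

end coercive

theorem integral_exp_neg_mul_le {c : ℝ} (hc : 0 < c) (t : ℝ) :
    ∫ τ in (0 : ℝ)..t, exp (-c * τ) ≤ 1 / c := by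
  rw [intervalIntegral.integral_comp_mul_left (fun τ => exp τ) (neg_ne_zero.mpr hc.ne'),
    integral_exp, mul_zero, exp_zero, smul_eq_mul, inv_neg, neg_mul,
    ← mul_neg, neg_sub, ← div_eq_inv_mul]
  gcongr
  linarith [exp_pos (-c * t)]

theorem norm_le_mul_exp_of_inner_deriv_le {E : Type*} [NormedAddCommGroup E]
    [InnerProductSpace ℝ E] {f f' : ℝ → E} {a b c : ℝ} (hf : ContinuousOn f (Icc a b))
    (hf' : ∀ x ∈ Ico a b, HasDerivWithinAt f (f' x) (Ici x) x)
    (bound : ∀ x ∈ Ico a b, ⟪f' x, f x⟫ ≤ -c * ‖f x‖ ^ 2) :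
    ∀ x ∈ Icc a b, ‖f x‖ ≤ ‖f a‖ * exp (-c * (x - a)) := by
  intro x hx
  have hsq : ‖f x‖ ^ 2 ≤ ‖f a‖ ^ 2 * exp (-2 * c * (x - a)) := by
    rw [← gronwallBound_ε0]
    refine le_gronwallBound_of_liminf_deriv_right_le (f := fun x => ‖f x‖ ^ 2)
      (hf.norm.pow 2) (fun y hy _ hr => (hf' y hy).norm_sq.liminf_right_slope_le hr) le_rfl
      (fun y hy => ?_) x hx
    linarith [bound y hy, real_inner_comm (f y) (f' y)]
  have hexp : ‖f a‖ ^ 2 * exp (-2 * c * (x - a)) = (‖f a‖ * exp (-c * (x - a))) ^ 2 := by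
    rw [mul_pow, ← exp_nat_mul]
    ring_nf
  rw [hexp] at hsq
  exact (pow_le_pow_iff_left₀ (norm_nonneg _) (by positivity) two_ne_zero).mp hsq

/-- Bound on A = ∫₀ᵗ‖η(τ)‖dτ from the proof of Theorems 1 and 3 of the supplement:
under the hypotheses of Lemma 1, ∫₀ᵗ ‖η(τ)‖ dτ ≤ ‖η(0)‖/(p(1−q)). -/
theorem stmt1 {n : ℕ} (H : Matrix (Fin n) (Fin n) ℝ) (hH : H.IsHermitian)
    (p : ℝ) (hp : 0 < p)
    (hmin : IsLeast (Set.range hH.eigenvalues) p)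
    (t : ℝ) (ht : 0 < t)
    (ΔH : ℝ → Matrix (Fin n) (Fin n) ℝ)
    (hΔcont : ContinuousOn ΔH (Set.Icc 0 t))
    (η : ℝ → EuclideanSpace ℝ (Fin n)) (hηdiff : Differentiable ℝ η)
    (hode : ∀ τ ∈ Set.Icc (0 : ℝ) t,
      deriv η τ = -(Matrix.toEuclideanLin (H + ΔH τ)) (η τ))
    (q : ℝ) (hq : q = (⨆ τ ∈ Set.Icc (0 : ℝ) t, opNorm (ΔH τ)) / p)
    (hq1 : q < 1) :
    ∫ τ in (0 : ℝ)..t, ‖η τ‖ ≤ ‖η 0‖ / (p * (1 - q)) := by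
  set S := ⨆ τ ∈ Set.Icc (0 : ℝ) t, opNorm (ΔH τ)
  have hS : ∀ τ ∈ Icc 0 t, opNorm (ΔH τ) ≤ S := fun τ hτ =>
    isCompact_Icc.le_biSup_of_continuousOn (continuous_opNorm.comp_continuousOn hΔcont) hτ
  set c := p * (1 - q)
  have hc : c = p - S := by simp only [c, hq]; field_simp
  have hcpos : 0 < c := mul_pos hp (by linarith)
  have hcoercive : ∀ τ ∈ Icc 0 t, ∀ x, c * ‖x‖ ^ 2 ≤ ⟪Matrix.toEuclideanLin (H + ΔH τ) x, x⟫ :=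
    fun τ hτ x => calc
      c * ‖x‖ ^ 2 ≤ (p - opNorm (ΔH τ)) * ‖x‖ ^ 2 := by rw [hc]; gcongr; exact hS τ hτ
      _ ≤ _ := hH.sub_opNorm_mul_norm_sq_le_inner (fun i => hmin.2 ⟨i, rfl⟩) (ΔH τ) x
  have hdecay : ∀ τ ∈ Icc 0 t, ‖η τ‖ ≤ ‖η 0‖ * exp (-c * τ) := by
    have := norm_le_mul_exp_of_inner_deriv_le hηdiff.continuous.continuousOn
      (fun τ _ => (hηdiff τ).hasDerivAt.hasDerivWithinAt) fun τ hτ => by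
        rw [hode τ (Ico_subset_Icc_self hτ), inner_neg_left, neg_mul, neg_le_neg_iff]
        exact hcoercive τ (Ico_subset_Icc_self hτ) (η τ)
    simpa only [sub_zero] using this
  calc ∫ τ in (0 : ℝ)..t, ‖η τ‖
      ≤ ∫ τ in (0 : ℝ)..t, ‖η 0‖ * exp (-c * τ) :=
        intervalIntegral.integral_mono_on ht.le (hηdiff.continuous.norm.intervalIntegrable _ _)
          (Continuous.intervalIntegrable (by fun_prop) _ _) hdecay
    _ = ‖η 0‖ * ∫ τ in (0 : ℝ)..t, exp (-c * τ) := intervalIntegral.integral_const_mul _ _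
    _ ≤ ‖η 0‖ * (1 / c) := by gcongr; exact integral_exp_neg_mul_le hcpos t
    _ = ‖η 0‖ / c := mul_one_div _ _
end

section
/- Let n ∈ ℕ, let H̄ be an n×n real symmetric matrix all of whose eigenvalues are ≥ p for some p > 0, let t > 0, let q ≥ 0, and let ΔH̄ : ℝ → (n×n real matrices) be continuous on [0,t] with ‖ΔH̄(τ)‖_op ≤ q·p for all τ ∈ [0,t]. Then for every continuous function Δη : [0,t] → ℝⁿ, ∫₀ᵗ ‖ ∫₀ˢ exp(−(s−τ) H̄) ΔH̄(τ) Δη(τ) dτ ‖ ds ≤ q ∫₀ᵗ ‖Δη(s)‖ ds. -/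
open Set Real intervalIntegral

section Primitive

variable {E : Type*} [NormedAddCommGroup E] [NormedSpace ℝ E] {f : ℝ → E} {a b : ℝ}

theorem continuousOn_primitive_of_continuousOn_Icc (hf : ContinuousOn f (Icc a b)) (hab : a ≤ b) :
    ContinuousOn (fun u => ∫ y in a..u, f y) (Icc a b) := by
  simpa [uIcc_of_le hab] using continuousOn_primitive_interval (hf.integrableOn_Icc.mono_set
    (uIcc_subset_Icc (left_mem_Icc.mpr hab) (right_mem_Icc.mpr hab)))

theorem hasDerivAt_primitive_of_continuousOn_Icc [CompleteSpace E] (hf : ContinuousOn f (Icc a b))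
    {x : ℝ} (hx : x ∈ Ioo a b) : HasDerivAt (fun u => ∫ y in a..u, f y) (f x) x :=
  integral_hasDerivAt_right
    ((hf.mono (Icc_subset_Icc_right hx.2.le)).intervalIntegrable_of_Icc hx.1.le)
    ((hf.mono Ioo_subset_Icc_self).stronglyMeasurableAtFilter isOpen_Ioo x hx)
    (hf.continuousAt (Icc_mem_nhds hx.1 hx.2))

end Primitive

section ExpKernel

theorem integral_exp_kernel_eq (g : ℝ → ℝ) (p s : ℝ) :
    ∫ τ in (0 : ℝ)..s, p * exp (-((s - τ) * p)) * g τ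
      = p * exp (-(s * p)) * ∫ τ in (0 : ℝ)..s, exp (τ * p) * g τ := by
  rw [← integral_const_mul]
  congr with τ
  rw [show -((s - τ) * p) = -(s * p) + τ * p by ring, exp_add]
  ring

variable {g : ℝ → ℝ} {t : ℝ}

theorem continuousOn_integral_exp_kernel (hg : ContinuousOn g (Icc 0 t)) (ht : 0 ≤ t) (p : ℝ) :
    ContinuousOn (fun s => ∫ τ in (0 : ℝ)..s, p * exp (-((s - τ) * p)) * g τ) (Icc 0 t) := by
  have hprimitive := continuousOn_primitive_of_continuousOn_Icc
    (f := fun τ => exp (τ * p) * g τ) (by fun_prop) ht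
  simp_rw [integral_exp_kernel_eq]
  fun_prop

theorem integral_integral_exp_kernel_eq (hg : ContinuousOn g (Icc 0 t)) (ht : 0 ≤ t) (p : ℝ) :
    ∫ s in (0 : ℝ)..t, ∫ τ in (0 : ℝ)..s, p * exp (-((s - τ) * p)) * g τ
      = (∫ s in (0 : ℝ)..t, g s) - exp (-(t * p)) * ∫ τ in (0 : ℝ)..t, exp (τ * p) * g τ := by
  have hK := continuousOn_integral_exp_kernel hg ht p
  simp_rw [integral_exp_kernel_eq] at hK ⊢
  set F := fun s => ∫ τ in (0 : ℝ)..s, exp (τ * p) * g τ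
  have hweighted : ContinuousOn (fun τ => exp (τ * p) * g τ) (Icc 0 t) := by fun_prop
  have hF : ContinuousOn F (Icc 0 t) := continuousOn_primitive_of_continuousOn_Icc hweighted ht
  have hderiv : ∀ s ∈ Ioo 0 t,
      HasDerivAt (fun s => -(exp (-(s * p)) * F s)) (p * exp (-(s * p)) * F s - g s) s := by
    intro s hs
    refine (((hasDerivAt_mul_const p).neg.exp).mul
      (hasDerivAt_primitive_of_continuousOn_Icc hweighted hs)).neg.congr_deriv ?_
    have : exp (-(s * p)) * exp (s * p) = 1 := by rw [← exp_add, neg_add_cancel, exp_zero]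
    simp only [Pi.neg_apply]
    linear_combination -g s * this
  have hFTC := integral_eq_sub_of_hasDerivAt_of_le ht
    (by fun_prop) hderiv ((hK.sub hg).intervalIntegrable_of_Icc ht)
  rw [integral_sub (hK.intervalIntegrable_of_Icc ht) (hg.intervalIntegrable_of_Icc ht)] at hFTC
  simp only [F, integral_same, mul_zero, neg_zero, sub_zero] at hFTC
  linarith

theorem integral_integral_exp_kernel_le (hg : ContinuousOn g (Icc 0 t))
    (hg0 : ∀ x ∈ Icc 0 t, 0 ≤ g x) (ht : 0 ≤ t) (p : ℝ) :
    ∫ s in (0 : ℝ)..t, ∫ τ in (0 : ℝ)..s, p * exp (-((s - τ) * p)) * g τ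
      ≤ ∫ s in (0 : ℝ)..t, g s := by
  rw [integral_integral_exp_kernel_eq hg ht]
  refine sub_le_self _ (mul_nonneg (exp_pos _).le (integral_nonneg ht fun τ hτ => ?_))
  exact mul_nonneg (exp_pos _).le (hg0 τ hτ)

end ExpKernel

section SpectralBound

open Matrix
open scoped Matrix.Norms.L2Operator

theorem Matrix.l2_opNorm_eq_opNorm {m n : Type*} [Fintype m] [Fintype n] [DecidableEq n]
    (A : Matrix m n ℝ) : ‖A‖ = opNorm A :=
  rfl

theorem IsSelfAdjoint.exp_neg_smul_eq_cfc {A : Type*} [NormedRing A] [StarRing A]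
    [NormedAlgebra ℝ A] [StarModule ℝ A] [ContinuousFunctionalCalculus ℝ A IsSelfAdjoint]
    {a : A} (ha : IsSelfAdjoint a) (c : ℝ) :
    NormedSpace.exp (-(c • a)) = cfc (fun x => Real.exp (-(c * x))) a := by
  have hca : IsSelfAdjoint (c • a) := (IsSelfAdjoint.all c).smul ha
  rw [← CFC.real_exp_eq_normedSpace_exp hca.neg,
    ← cfc_comp_neg Real.exp (c • a) continuous_exp.continuousOn hca, ← cfc_comp_smul c _ a]
  rfl

theorem Matrix.IsHermitian.l2_opNorm_cfc_le {𝕜 n : Type*} [RCLike 𝕜] [Fintype n] [DecidableEq n]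
    {A : Matrix n n 𝕜} (hA : A.IsHermitian) (f : ℝ → ℝ) {c : ℝ} (hc : 0 ≤ c)
    (hf : ∀ i, |f (hA.eigenvalues i)| ≤ c) : ‖cfc f A‖ ≤ c := by
  rw [hA.cfc_eq, IsHermitian.cfc, Unitary.conjStarAlgAut_apply,
    CStarRing.norm_mul_mem_unitary _ (Unitary.star_mem hA.eigenvectorUnitary.2),
    CStarRing.norm_coe_unitary_mul, l2_opNorm_diagonal]
  exact pi_norm_le_iff_of_nonneg hc |>.mpr fun i => by simpa using hf i

theorem Matrix.IsHermitian.l2_opNorm_exp_neg_smul_le {n : Type*} [Fintype n] [DecidableEq n]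
    {A : Matrix n n ℝ} (hA : A.IsHermitian) {p : ℝ} (hp : ∀ i, p ≤ hA.eigenvalues i)
    {a : ℝ} (ha : 0 ≤ a) : ‖NormedSpace.exp (-(a • A))‖ ≤ Real.exp (-(a * p)) := by
  rw [IsSelfAdjoint.exp_neg_smul_eq_cfc hA.isSelfAdjoint]
  refine hA.l2_opNorm_cfc_le _ (exp_pos _).le fun i => ?_
  rw [abs_of_pos (exp_pos _), exp_le_exp]
  exact neg_le_neg (mul_le_mul_of_nonneg_left (hp i) ha)

theorem norm_toEuclideanLin_exp_neg_smul_mul_le {n : Type*} [Fintype n] [DecidableEq n]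
    {A : Matrix n n ℝ} (hA : A.IsHermitian) {p : ℝ} (hp : ∀ i, p ≤ hA.eigenvalues i)
    {a : ℝ} (ha : 0 ≤ a) (D : Matrix n n ℝ) (v : EuclideanSpace ℝ n) :
    ‖toEuclideanLin (NormedSpace.exp (-(a • A)) * D) v‖ ≤ exp (-(a * p)) * opNorm D * ‖v‖ :=
  calc ‖toEuclideanLin (NormedSpace.exp (-(a • A)) * D) v‖
      ≤ ‖NormedSpace.exp (-(a • A)) * D‖ * ‖v‖ := (toEuclideanCLM (𝕜 := ℝ) _).le_opNorm v
    _ ≤ ‖NormedSpace.exp (-(a • A))‖ * ‖D‖ * ‖v‖ := by gcongr; exact l2_opNorm_mul _ _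
    _ ≤ exp (-(a * p)) * ‖D‖ * ‖v‖ := by gcongr; exact hA.l2_opNorm_exp_neg_smul_le hp ha
    _ = exp (-(a * p)) * opNorm D * ‖v‖ := by rw [l2_opNorm_eq_opNorm]

theorem norm_integral_exp_neg_smul_mul_le {n : Type*} [Fintype n] [DecidableEq n]
    {A : Matrix n n ℝ} (hA : A.IsHermitian) {p q s : ℝ} (hp : ∀ i, p ≤ hA.eigenvalues i)
    (hs : 0 ≤ s) {D : ℝ → Matrix n n ℝ} (hD : ∀ τ ∈ Icc 0 s, opNorm (D τ) ≤ q * p)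
    {v : ℝ → EuclideanSpace ℝ n} (hv : ContinuousOn v (Icc 0 s)) :
    ‖∫ τ in (0 : ℝ)..s, toEuclideanLin (NormedSpace.exp (-((s - τ) • A)) * D τ) (v τ)‖
      ≤ q * ∫ τ in (0 : ℝ)..s, p * Real.exp (-((s - τ) * p)) * ‖v τ‖ := by
  rw [← integral_const_mul]
  refine norm_integral_le_of_norm_le hs (MeasureTheory.ae_of_all _ fun τ hτ => ?_)
    (ContinuousOn.intervalIntegrable_of_Icc hs (by fun_prop))
  calc ‖toEuclideanLin (NormedSpace.exp (-((s - τ) • A)) * D τ) (v τ)‖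
      ≤ Real.exp (-((s - τ) * p)) * opNorm (D τ) * ‖v τ‖ :=
        norm_toEuclideanLin_exp_neg_smul_mul_le hA hp (sub_nonneg.2 hτ.2) _ _
    _ ≤ Real.exp (-((s - τ) * p)) * (q * p) * ‖v τ‖ := by
        gcongr
        exact hD τ (Ioc_subset_Icc_self hτ)
    _ = q * (p * Real.exp (-((s - τ) * p)) * ‖v τ‖) := by ring

end SpectralBound

theorem stmt2_general {n : ℕ} (H : Matrix (Fin n) (Fin n) ℝ) (hH : H.IsHermitian)
    (p : ℝ) (heig : ∀ i, p ≤ hH.eigenvalues i)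
    (t : ℝ) (ht : 0 < t) (q : ℝ) (hq : 0 ≤ q)
    (ΔH : ℝ → Matrix (Fin n) (Fin n) ℝ)
    (hΔ : ∀ τ ∈ Set.Icc (0 : ℝ) t, opNorm (ΔH τ) ≤ q * p)
    (Δη : ℝ → EuclideanSpace ℝ (Fin n)) (hΔη : ContinuousOn Δη (Set.Icc 0 t)) :
    ∫ s in (0 : ℝ)..t,
        ‖∫ τ in (0 : ℝ)..s,
            Matrix.toEuclideanLin (NormedSpace.exp (-((s - τ) • H)) * ΔH τ) (Δη τ)‖
      ≤ q * ∫ s in (0 : ℝ)..t, ‖Δη s‖ := by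
  have hK := continuousOn_integral_exp_kernel hΔη.norm ht.le p
  calc ∫ s in (0 : ℝ)..t,
        ‖∫ τ in (0 : ℝ)..s,
            Matrix.toEuclideanLin (NormedSpace.exp (-((s - τ) • H)) * ΔH τ) (Δη τ)‖
      ≤ ∫ s in (0 : ℝ)..t, q * ∫ τ in (0 : ℝ)..s, p * Real.exp (-((s - τ) * p)) * ‖Δη τ‖ := by
        rw [integral_of_le ht.le, integral_of_le ht.le]
        refine MeasureTheory.integral_mono_of_nonneg
          (MeasureTheory.ae_of_all _ fun s => norm_nonneg _)
          ((hK.const_smul q).integrableOn_Icc.mono_set Ioc_subset_Icc_self) ?_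
        filter_upwards [MeasureTheory.ae_restrict_mem measurableSet_Ioc] with s hs
        exact norm_integral_exp_neg_smul_mul_le hH heig hs.1.le
          (fun τ hτ => hΔ τ ⟨hτ.1, hτ.2.trans hs.2⟩) (hΔη.mono (Icc_subset_Icc_right hs.2))
    _ = q * ∫ s in (0 : ℝ)..t, ∫ τ in (0 : ℝ)..s, p * Real.exp (-((s - τ) * p)) * ‖Δη τ‖ :=
        integral_const_mul _ _
    _ ≤ q * ∫ s in (0 : ℝ)..t, ‖Δη s‖ := by
        gcongr
        exact integral_integral_exp_kernel_le hΔη.norm (fun _ _ => norm_nonneg _) ht.le p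

/-- Contraction property (in L¹ norm) of the Picard-type map 𝒯 from the proof of
Lemma 1 of the supplement: if H̄ is symmetric with all eigenvalues ≥ p > 0 and
‖ΔH̄(τ)‖_op ≤ qp on [0,t], then
∫₀ᵗ ‖∫₀ˢ exp(−(s−τ)H̄) ΔH̄(τ) Δη(τ) dτ‖ ds ≤ q ∫₀ᵗ ‖Δη(s)‖ ds. -/
theorem stmt2 {n : ℕ} (H : Matrix (Fin n) (Fin n) ℝ) (hH : H.IsHermitian)
    (p : ℝ) (hp : 0 < p) (heig : ∀ i, p ≤ hH.eigenvalues i)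
    (t : ℝ) (ht : 0 < t) (q : ℝ) (hq : 0 ≤ q)
    (ΔH : ℝ → Matrix (Fin n) (Fin n) ℝ)
    (hΔcont : ContinuousOn ΔH (Set.Icc 0 t))
    (hΔ : ∀ τ ∈ Set.Icc (0 : ℝ) t, opNorm (ΔH τ) ≤ q * p)
    (Δη : ℝ → EuclideanSpace ℝ (Fin n)) (hΔη : ContinuousOn Δη (Set.Icc 0 t)) :
    ∫ s in (0 : ℝ)..t,
        ‖∫ τ in (0 : ℝ)..s,
            Matrix.toEuclideanLin (NormedSpace.exp (-((s - τ) • H)) * ΔH τ) (Δη τ)‖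
      ≤ q * ∫ s in (0 : ℝ)..t, ‖Δη s‖ :=
  stmt2_general H hH p heig t ht q hq ΔH hΔ Δη hΔη
end

section
/- Let n, m ∈ ℕ, let λ ≥ 0, let a₁,…,a_m be real numbers, and for each k ∈ {1,…,m} let ΔH_k be an n×n real matrix. Let ΔH̄ be the (nm)×(nm) real block matrix, with blocks indexed by k,l ∈ {1,…,m}, whose (k,l) block is the n×n matrix (a_k a_l/m + λ δ_{kl}) ΔH_k, where δ_{kl} is the Kronecker delta. Then ‖ΔH̄‖_op ≤ √2 · √(λ² + a²) · max_{1≤k≤m} ‖ΔH_k‖_op, where a := Σ_{k=1}^m a_k²/m. -/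
open scoped Matrix.Norms.L2Operator Kronecker

namespace Matrix

theorem blockDiagonal_mulVec {α : Type*} [NonUnitalNonAssocSemiring α] {m n o : Type*} [Fintype n]
    [Fintype o] [DecidableEq o] (M : o → Matrix m n α) (x : n × o → α) (i : m) (k : o) :
    (blockDiagonal M *ᵥ x) (i, k) = (M k *ᵥ fun j => x (j, k)) i := by
  simp [mulVec, dotProduct, blockDiagonal_apply, Fintype.sum_prod_type]

variable {𝕜 : Type*} [RCLike 𝕜] {m n o : Type*} [Fintype m] [Fintype n] [Fintype o]
  [DecidableEq n] [DecidableEq o]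

theorem sum_norm_mulVec_sq_le (A : Matrix m n 𝕜) (x : n → 𝕜) :
    ∑ i, ‖(A *ᵥ x) i‖ ^ 2 ≤ ‖A‖ ^ 2 * ∑ j, ‖x j‖ ^ 2 := by
  have h := A.l2_opNorm_mulVec (WithLp.toLp 2 x)
  rw [← sq_le_sq₀ (norm_nonneg _) (by positivity), mul_pow,
    EuclideanSpace.norm_sq_eq, EuclideanSpace.norm_sq_eq] at h
  exact h

theorem l2_opNorm_le_of_sum_norm_mulVec_sq_le {A : Matrix m n 𝕜} {C : ℝ} (hC : 0 ≤ C)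
    (h : ∀ x : n → 𝕜, ∑ i, ‖(A *ᵥ x) i‖ ^ 2 ≤ C ^ 2 * ∑ j, ‖x j‖ ^ 2) : ‖A‖ ≤ C := by
  refine ContinuousLinearMap.opNorm_le_bound _ hC fun x => ?_
  rw [← sq_le_sq₀ (norm_nonneg _) (by positivity), mul_pow,
    EuclideanSpace.norm_sq_eq, EuclideanSpace.norm_sq_eq]
  exact h x

theorem l2_opNorm_submatrix_equiv_le {m' n' : Type*} [Fintype m'] [Fintype n'] [DecidableEq n']
    (A : Matrix m n 𝕜) (e₁ : m' ≃ m) (e₂ : n' ≃ n) : ‖A.submatrix e₁ e₂‖ ≤ ‖A‖ := by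
  refine l2_opNorm_le_of_sum_norm_mulVec_sq_le (norm_nonneg _) fun x => ?_
  rw [submatrix_mulVec_equiv, ← e₂.symm.sum_comp]
  simpa only [Function.comp_apply, e₁.sum_comp (fun i => ‖(A *ᵥ (x ∘ e₂.symm)) i‖ ^ 2)]
    using sum_norm_mulVec_sq_le A (x ∘ e₂.symm)

theorem l2_opNorm_reindex {m' n' : Type*} [Fintype m'] [Fintype n'] [DecidableEq n']
    (e₁ : m ≃ m') (e₂ : n ≃ n') (A : Matrix m n 𝕜) : ‖reindex e₁ e₂ A‖ = ‖A‖ := by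
  refine le_antisymm (l2_opNorm_submatrix_equiv_le A _ _) ?_
  simpa using l2_opNorm_submatrix_equiv_le (reindex e₁ e₂ A) e₁ e₂

theorem l2_opNorm_blockDiagonal_le (M : o → Matrix m n 𝕜) {C : ℝ} (hC : 0 ≤ C)
    (hM : ∀ k, ‖M k‖ ≤ C) : ‖blockDiagonal M‖ ≤ C := by
  refine l2_opNorm_le_of_sum_norm_mulVec_sq_le hC fun x => ?_
  calc ∑ p, ‖(blockDiagonal M *ᵥ x) p‖ ^ 2
      = ∑ k, ∑ i, ‖(M k *ᵥ fun j => x (j, k)) i‖ ^ 2 := by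
        rw [Fintype.sum_prod_type_right]; simp only [blockDiagonal_mulVec]
    _ ≤ ∑ k, C ^ 2 * ∑ j, ‖x (j, k)‖ ^ 2 := by
        gcongr with k
        exact (sum_norm_mulVec_sq_le _ _).trans (by gcongr; exact hM k)
    _ = C ^ 2 * ∑ q, ‖x q‖ ^ 2 := by rw [← Finset.mul_sum, Fintype.sum_prod_type_right]

theorem l2_opNorm_vecMulVec_le (u v : n → ℝ) :
    ‖vecMulVec u v‖ ≤ √(∑ i, u i ^ 2) * √(∑ j, v j ^ 2) := by
  have hu : 0 ≤ ∑ i, u i ^ 2 := by positivity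
  have hv : 0 ≤ ∑ j, v j ^ 2 := by positivity
  refine l2_opNorm_le_of_sum_norm_mulVec_sq_le (by positivity) fun x => ?_
  calc ∑ i, ‖(vecMulVec u v *ᵥ x) i‖ ^ 2 = (∑ i, u i ^ 2) * (v ⬝ᵥ x) ^ 2 := by
        simp only [vecMulVec_mulVec, op_smul_eq_smul, Pi.smul_apply, smul_eq_mul,
          Real.norm_eq_abs, sq_abs, mul_pow, ← Finset.mul_sum]
        ring
    _ ≤ (∑ i, u i ^ 2) * ((∑ j, v j ^ 2) * ∑ j, x j ^ 2) := by
        gcongr; exact Finset.sum_mul_sq_le_sq_mul_sq _ _ _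
    _ = (√(∑ i, u i ^ 2) * √(∑ j, v j ^ 2)) ^ 2 * ∑ j, ‖x j‖ ^ 2 := by
        simp only [mul_pow, Real.sq_sqrt hu, Real.sq_sqrt hv, Real.norm_eq_abs, sq_abs]
        ring

theorem l2_opNorm_diagonal_const_add_smul_vecMulVec_self_le (lam c : ℝ) (a : n → ℝ) :
    ‖diagonal (fun _ => lam) + c • vecMulVec a a‖ ≤ |lam| + |c| * ∑ i, a i ^ 2 :=
  calc _ ≤ ‖diagonal (fun _ : n => lam)‖ + ‖c • vecMulVec a a‖ := norm_add_le _ _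
    _ ≤ |lam| + |c| * (√(∑ i, a i ^ 2) * √(∑ i, a i ^ 2)) := by
        gcongr
        · rw [l2_opNorm_diagonal, ← Real.norm_eq_abs]
          exact pi_norm_const_le lam
        · rw [norm_smul, Real.norm_eq_abs]
          gcongr
          exact l2_opNorm_vecMulVec_le a a
    _ = _ := by rw [Real.mul_self_sqrt (by positivity)]

theorem l2_opNorm_kronecker_one_le (G : Matrix m n 𝕜) : ‖G ⊗ₖ (1 : Matrix o o 𝕜)‖ ≤ ‖G‖ := by
  rw [kronecker_one]
  exact l2_opNorm_blockDiagonal_le _ (norm_nonneg G) fun _ => le_rfl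

theorem eq_reindex_blockDiagonal_mul_kronecker_one {α : Type*} [CommSemiring α]
    {ι ι' κ κ' : Type*} [Fintype ι] [Fintype κ'] [DecidableEq ι] [DecidableEq κ']
    {A : Matrix (ι × κ) (ι' × κ') α} {G : Matrix ι ι' α} {B : ι → Matrix κ κ' α}
    (hA : ∀ k l i j, A (k, i) (l, j) = G k l * B k i j) :
    A = reindex (.prodComm κ ι) (.prodComm κ' ι) (blockDiagonal B) *
      (G ⊗ₖ (1 : Matrix κ' κ' α)) := by
  refine Matrix.ext fun ⟨k, i⟩ ⟨l, j⟩ => ?_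
  rw [hA, Matrix.mul_apply, Fintype.sum_prod_type]
  simp [blockDiagonal_apply, one_apply, mul_comm]

theorem l2_opNorm_le_of_apply_eq_mul {ι ι' κ κ' : Type*} [Fintype ι] [Fintype ι'] [Fintype κ]
    [Fintype κ'] [DecidableEq ι] [DecidableEq ι'] [DecidableEq κ']
    {A : Matrix (ι × κ) (ι' × κ') 𝕜} {G : Matrix ι ι' 𝕜} {B : ι → Matrix κ κ' 𝕜}
    (hA : ∀ k l i j, A (k, i) (l, j) = G k l * B k i j) {C : ℝ} (hC : 0 ≤ C)
    (hB : ∀ k, ‖B k‖ ≤ C) : ‖A‖ ≤ C * ‖G‖ := by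
  rw [eq_reindex_blockDiagonal_mul_kronecker_one hA]
  refine (l2_opNorm_mul _ _).trans (mul_le_mul ?_ (l2_opNorm_kronecker_one_le G)
    (norm_nonneg _) hC)
  rw [l2_opNorm_reindex]
  exact l2_opNorm_blockDiagonal_le B hC hB

end Matrix

theorem opNorm_eq_l2_opNorm {ι κ : Type*} [Fintype ι] [Fintype κ] [DecidableEq κ]
    (A : Matrix ι κ ℝ) : opNorm A = ‖A‖ :=
  rfl

theorem abs_add_abs_le_sqrt_two_mul_sqrt (x y : ℝ) : |x| + |y| ≤ √2 * √(x ^ 2 + y ^ 2) := by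
  rw [← Real.sqrt_mul zero_le_two]
  apply Real.le_sqrt_of_sq_le
  nlinarith [sq_nonneg (|x| - |y|), sq_abs x, sq_abs y]

theorem stmt4_general {n m : ℕ} (lam : ℝ) (a : Fin m → ℝ)
    (ΔH : Fin m → Matrix (Fin n) (Fin n) ℝ)
    (abar : ℝ) (habar : abar = ∑ k, a k ^ 2 / (m : ℝ))
    (Hbar : Matrix (Fin m × Fin n) (Fin m × Fin n) ℝ)
    (hHbar : ∀ k l i j, Hbar (k, i) (l, j) =
      (a k * a l / (m : ℝ) + lam * (if k = l then 1 else 0)) * ΔH k i j) :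
    opNorm Hbar ≤ Real.sqrt 2 * Real.sqrt (lam ^ 2 + abar ^ 2) * ⨆ k, opNorm (ΔH k) := by
  simp only [opNorm_eq_l2_opNorm]
  set M := ⨆ k, ‖ΔH k‖
  have hM0 : 0 ≤ M := Real.iSup_nonneg fun k => norm_nonneg _
  have hM : ∀ k, ‖ΔH k‖ ≤ M := fun k =>
    le_ciSup (f := fun k => ‖ΔH k‖) (Set.finite_range _).bddAbove k
  set G : Matrix (Fin m) (Fin m) ℝ :=
    Matrix.diagonal (fun _ => lam) + (m : ℝ)⁻¹ • Matrix.vecMulVec a a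
  have hHbarG : ∀ k l i j, Hbar (k, i) (l, j) = G k l * ΔH k i j := by
    intro k l i j
    simp only [hHbar, G, Matrix.add_apply, Matrix.diagonal_apply, Matrix.smul_apply,
      Matrix.vecMulVec_apply, smul_eq_mul, mul_ite, mul_one, mul_zero]
    ring
  have hG : ‖G‖ ≤ |lam| + |abar| := by
    refine (Matrix.l2_opNorm_diagonal_const_add_smul_vecMulVec_self_le lam _ a).trans
      (add_le_add_right ?_ _)
    rw [abs_inv, Nat.abs_cast, inv_mul_eq_div, Finset.sum_div, ← habar]
    exact le_abs_self abar
  calc ‖Hbar‖ ≤ M * ‖G‖ := Matrix.l2_opNorm_le_of_apply_eq_mul hHbarG hM0 hM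
    _ ≤ M * (√2 * √(lam ^ 2 + abar ^ 2)) := by
        gcongr
        exact hG.trans (abs_add_abs_le_sqrt_two_mul_sqrt lam abar)
    _ = _ := mul_comm _ _

/-- Supplement, Lemma 2: the spectral norm of the block matrix ΔH̄, whose (k,l) block is
(aₖaₗ/m + λδ_{kl}) ΔHₖ, is at most √2 √(λ² + a²) maxₖ ‖ΔHₖ‖_op, where a = Σₖ aₖ²/m. -/
theorem stmt4 {n m : ℕ} (lam : ℝ) (hlam : 0 ≤ lam) (a : Fin m → ℝ)
    (ΔH : Fin m → Matrix (Fin n) (Fin n) ℝ)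
    (abar : ℝ) (habar : abar = ∑ k, a k ^ 2 / (m : ℝ))
    (Hbar : Matrix (Fin m × Fin n) (Fin m × Fin n) ℝ)
    (hHbar : ∀ k l i j, Hbar (k, i) (l, j) =
      (a k * a l / (m : ℝ) + lam * (if k = l then 1 else 0)) * ΔH k i j) :
    opNorm Hbar ≤ Real.sqrt 2 * Real.sqrt (lam ^ 2 + abar ^ 2) * ⨆ k, opNorm (ΔH k) :=
  stmt4_general lam a ΔH abar habar Hbar hHbar
end

section
/- Let n, m ∈ ℕ, let H₁,…,H_m be symmetric positive-semidefinite n×n real matrices, let a₁,…,a_m ∈ ℝ, let λ ≥ 0, and let p ∈ ℝ be such that pI − λH_k is invertible for every k. Let H̄ be the (nm)×(nm) real block matrix, with blocks indexed by k,l ∈ {1,…,m}, whose (k,l) block is the n×n matrix (a_k a_l/m + λ δ_{kl}) H_k, where δ_{kl} is the Kronecker delta. Suppose v ∈ ℝⁿ satisfies Σ_{k=1}^m (a_k²/m) (pI − λH_k)^{-1} H_k v = v. Then the block vector η ∈ ℝ^{nm} whose k-th block is v_k := (a_k/√m) (pI − λH_k)^{-1} H_k v satisfies H̄ η = p η, and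 moreover Σ_{k=1}^m (a_k/√m) v_k = v. -/
/-!
With `b k = a k / √m` the `(k, l)` block of `H̄` is `(b k b l + λ δ_{kl}) H k`, because `√m² = m`.
Hence the `k`-th block of `H̄ η` is `H k (b k Σ_l b l v_l + λ v_k) = H k (b k v + λ v_k)` by the
second claim, and `(pI - λ H k) v_k = b k H k v` says exactly that this equals `p v_k`.
-/

open scoped Matrix

namespace Matrix

theorem mulVec_apply_of_blocks {ι κ R : Type*} [Fintype ι] [Fintype κ] [CommSemiring R]
    (M : Matrix (ι × κ) (ι × κ) R) (c : ι → ι → R) (B : ι → Matrix κ κ R)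
    (hM : ∀ k l i j, M (k, i) (l, j) = c k l * B k i j) (η : ι × κ → R) (w : ι → κ → R)
    (hη : ∀ k i, η (k, i) = w k i) (k : ι) (i : κ) :
    (M *ᵥ η) (k, i) = (B k *ᵥ ∑ l, c k l • w l) i := by
  simp only [mulVec, dotProduct, Fintype.sum_prod_type, hM, hη, Finset.sum_apply, Pi.smul_apply,
    smul_eq_mul, Finset.mul_sum]
  rw [Finset.sum_comm]
  exact Finset.sum_congr rfl fun l _ => Finset.sum_congr rfl fun j _ => by ring

theorem smul_eq_of_eq_smul_resolvent_mulVec {n K : Type*} [Fintype n] [DecidableEq n] [Field K]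
    {H : Matrix n n K} {p lam : K} (hinv : IsUnit (p • (1 : Matrix n n K) - lam • H))
    (c : K) (v w : n → K) (hw : w = c • (((p • (1 : Matrix n n K) - lam • H)⁻¹ * H) *ᵥ v)) :
    p • w = lam • (H *ᵥ w) + c • (H *ᵥ v) := by
  have hcancel : (p • (1 : Matrix n n K) - lam • H) *ᵥ w = c • (H *ᵥ v) := by
    rw [hw, mulVec_smul, mulVec_mulVec, ← Matrix.mul_assoc,
      mul_nonsing_inv _ ((isUnit_iff_isUnit_det _).mp hinv), Matrix.one_mul]
  rw [sub_mulVec, smul_mulVec, smul_mulVec, one_mulVec] at hcancel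
  rw [← hcancel, add_sub_cancel]

end Matrix

theorem stmt7_general {n m : ℕ} (H : Fin m → Matrix (Fin n) (Fin n) ℝ)
    (a : Fin m → ℝ) (lam : ℝ) (p : ℝ)
    (hinv : ∀ k, IsUnit (p • (1 : Matrix (Fin n) (Fin n) ℝ) - lam • H k))
    (Hbar : Matrix (Fin m × Fin n) (Fin m × Fin n) ℝ)
    (hHbar : ∀ k l i j, Hbar (k, i) (l, j) =
      (a k * a l / (m : ℝ) + lam * (if k = l then 1 else 0)) * H k i j)
    (v : Fin n → ℝ)
    (hv : ∑ k, (a k ^ 2 / (m : ℝ)) •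
        (((p • (1 : Matrix (Fin n) (Fin n) ℝ) - lam • H k)⁻¹ * H k) *ᵥ v) = v)
    (vk : Fin m → Fin n → ℝ)
    (hvk : ∀ k, vk k = (a k / Real.sqrt m) •
        (((p • (1 : Matrix (Fin n) (Fin n) ℝ) - lam • H k)⁻¹ * H k) *ᵥ v))
    (η : Fin m × Fin n → ℝ) (hη : ∀ k i, η (k, i) = vk k i) :
    Hbar *ᵥ η = p • η ∧ ∑ k, (a k / Real.sqrt m) • vk k = v := by
  set b : Fin m → ℝ := fun k => a k / Real.sqrt m
  have hb : ∀ k l, a k * a l / (m : ℝ) = b k * b l := fun k l => by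
    rw [div_mul_div_comm, Real.mul_self_sqrt m.cast_nonneg]
  have hsum : ∑ k, b k • vk k = v := by
    rw [← hv]
    refine Finset.sum_congr rfl fun k _ => ?_
    rw [hvk, smul_smul, sq, hb]
  have hblocks : ∀ k, ∑ l, (b k * b l + lam * if k = l then 1 else 0) • vk l
      = b k • v + lam • vk k := fun k => by
    simp only [add_smul, mul_smul, Finset.sum_add_distrib, ← Finset.smul_sum, hsum, mul_ite,
      mul_one, mul_zero, ite_smul, zero_smul, Finset.sum_ite_eq, Finset.mem_univ, if_true]
  refine ⟨funext fun ⟨k, i⟩ => ?_, hsum⟩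
  rw [Matrix.mulVec_apply_of_blocks Hbar _ H (fun k l i j => by rw [hHbar, hb]) η vk hη, hblocks,
    Pi.smul_apply, hη, ← Pi.smul_apply p (vk k) i,
    Matrix.smul_eq_of_eq_smul_resolvent_mulVec (hinv k) (b k) v (vk k) (hvk k),
    Matrix.mulVec_add, Matrix.mulVec_smul, Matrix.mulVec_smul, add_comm]

/-- Supplement, Lemma 5 (right-eigenvector part): if v satisfies
Σₖ (aₖ²/m)(pI − λHₖ)⁻¹Hₖ v = v, then the block vector with blocks
vₖ = (aₖ/√m)(pI − λHₖ)⁻¹Hₖ v is a right eigenvector of the block matrix H̄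
(whose (k,l) block is (aₖaₗ/m + λδ_{kl})Hₖ) with eigenvalue p, and Σₖ (aₖ/√m)vₖ = v. -/
theorem stmt7 {n m : ℕ} (H : Fin m → Matrix (Fin n) (Fin n) ℝ)
    (hH : ∀ k, (H k).PosSemidef)
    (a : Fin m → ℝ) (lam : ℝ) (hlam : 0 ≤ lam) (p : ℝ)
    (hinv : ∀ k, IsUnit (p • (1 : Matrix (Fin n) (Fin n) ℝ) - lam • H k))
    (Hbar : Matrix (Fin m × Fin n) (Fin m × Fin n) ℝ)
    (hHbar : ∀ k l i j, Hbar (k, i) (l, j) =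
      (a k * a l / (m : ℝ) + lam * (if k = l then 1 else 0)) * H k i j)
    (v : Fin n → ℝ)
    (hv : ∑ k, (a k ^ 2 / (m : ℝ)) •
        (((p • (1 : Matrix (Fin n) (Fin n) ℝ) - lam • H k)⁻¹ * H k) *ᵥ v) = v)
    (vk : Fin m → Fin n → ℝ)
    (hvk : ∀ k, vk k = (a k / Real.sqrt m) •
        (((p • (1 : Matrix (Fin n) (Fin n) ℝ) - lam • H k)⁻¹ * H k) *ᵥ v))
    (η : Fin m × Fin n → ℝ) (hη : ∀ k i, η (k, i) = vk k i) :
    Hbar *ᵥ η = p • η ∧ ∑ k, (a k / Real.sqrt m) • vk k = v :=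
  stmt7_general H a lam p hinv Hbar hHbar v hv vk hvk η hη
end

section
/- Let n, m ∈ ℕ, let H₁,…,H_m be symmetric positive-semidefinite n×n real matrices, let a₁,…,a_m ∈ ℝ, let λ ≥ 0, and let p ∈ ℝ be such that pI − λH_k is invertible for every k. Let H̄ be the (nm)×(nm) real block matrix, with blocks indexed by k,l ∈ {1,…,m}, whose (k,l) block is the n×n matrix (a_k a_l/m + λ δ_{kl}) H_k, where δ_{kl} is the Kronecker delta. Suppose u ∈ ℝⁿ satisfies Σ_{k=1}^m (a_k²/m) H_k (pI − λH_k)^{-1} u = u. Then the block vector η ∈ ℝ^{nm} whose k-th block is u_k := (a_k/√m) (pI − λH_k)^{-1} u satisfies H̄ᵀ η = p η, i.e. η is a left eigenvector of H̄ with eigenvalue p. -/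
/-!
Write `Aₖ = pI − λHₖ` and `wₖ = Hₖ Aₖ⁻¹ u`. Since `Aₖ + λHₖ = pI`, we have `p Aₖ⁻¹ u = u + λ wₖ`.
By the symmetry of the `Hₗ`, the `k`-th block of `H̄ᵀ η` is
`∑ₗ (aₗaₖ/m + λδₗₖ) Hₗ uₗ = (aₖ/√m) (∑ₗ (aₗ²/m) wₗ + λ wₖ) = (aₖ/√m) (u + λ wₖ)`,
which is `(aₖ/√m) p Aₖ⁻¹ u = p uₖ`.
-/

open Matrix Finset

theorem Matrix.smul_inv_sub_smul_eq_one_add {n R : Type*} [Fintype n] [DecidableEq n] [CommRing R]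
    (H : Matrix n n R) (p c : R) (h : IsUnit (p • 1 - c • H)) :
    p • (p • 1 - c • H)⁻¹ = 1 + c • (H * (p • 1 - c • H)⁻¹) := by
  set A := p • (1 : Matrix n n R) - c • H
  have hA : A * A⁻¹ = 1 := mul_nonsing_inv A ((isUnit_iff_isUnit_det A).mp h)
  calc p • A⁻¹ = (A + c • H) * A⁻¹ := by simp [A]
    _ = 1 + c • (H * A⁻¹) := by rw [add_mul, hA, smul_mul_assoc]

theorem Matrix.transpose_mulVec_of_blocks {ι n R : Type*} [Fintype ι] [Fintype n] [Semiring R]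
    (c : Matrix ι ι R) (H : ι → Matrix n n R) (B : Matrix (ι × n) (ι × n) R)
    (hB : ∀ k l i j, B (k, i) (l, j) = c k l * H k i j) (η : ι × n → R) (k : ι) :
    (fun i => (Bᵀ *ᵥ η) (k, i)) = ∑ l, c l k • ((H l)ᵀ *ᵥ fun j => η (l, j)) := by
  ext i
  simp only [mulVec, dotProduct, transpose_apply, Fintype.sum_prod_type, hB, Finset.sum_apply,
    Pi.smul_apply, smul_eq_mul, Finset.mul_sum, mul_assoc]

theorem sum_smul_transpose_mulVec_inv_eq {ι n 𝕜 : Type*} [Fintype ι] [DecidableEq ι] [Fintype n]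
    [DecidableEq n] [Field 𝕜] (H : ι → Matrix n n 𝕜) (hH : ∀ l, (H l).IsSymm) (a : ι → 𝕜)
    (m lam p s : 𝕜) (hinv : ∀ l, IsUnit (p • 1 - lam • H l)) (u : n → 𝕜)
    (hu : ∑ l, (a l ^ 2 / m) • ((H l * (p • 1 - lam • H l)⁻¹) *ᵥ u) = u) (k : ι) :
    ∑ l, (a l * a k / m + lam * if l = k then 1 else 0) •
        ((H l)ᵀ *ᵥ ((a l / s) • ((p • 1 - lam • H l)⁻¹ *ᵥ u)))
      = p • ((a k / s) • ((p • 1 - lam • H k)⁻¹ *ᵥ u)) := by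
  set w := fun l => (H l * (p • 1 - lam • H l)⁻¹) *ᵥ u
  have hsummand : ∀ l, (a l * a k / m + lam * if l = k then 1 else 0) •
      ((H l)ᵀ *ᵥ ((a l / s) • ((p • 1 - lam • H l)⁻¹ *ᵥ u)))
        = (a k / s) • ((a l ^ 2 / m) • w l) + if l = k then (a k / s) • (lam • w k) else 0 := by
    intro l
    rw [(hH l).eq, mulVec_smul, mulVec_mulVec, smul_smul]
    split_ifs with hlk
    · subst hlk; simp only [smul_smul, ← add_smul]; congr 1; ring
    · simp only [smul_smul, mul_zero, add_zero]; congr 1; ring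
  have hp : p • ((p • 1 - lam • H k)⁻¹ *ᵥ u) = u + lam • w k := by
    rw [← smul_mulVec, smul_inv_sub_smul_eq_one_add _ _ _ (hinv k), add_mulVec, one_mulVec,
      smul_mulVec]
  rw [sum_congr rfl fun l _ => hsummand l, sum_add_distrib, ← smul_sum, hu, sum_ite_eq',
    if_pos (mem_univ k), ← smul_add, ← hp, smul_comm]

theorem stmt8_general {n m : ℕ} (H : Fin m → Matrix (Fin n) (Fin n) ℝ)
    (hH : ∀ k, (H k).PosSemidef)
    (a : Fin m → ℝ) (lam : ℝ) (p : ℝ)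
    (hinv : ∀ k, IsUnit (p • (1 : Matrix (Fin n) (Fin n) ℝ) - lam • H k))
    (Hbar : Matrix (Fin m × Fin n) (Fin m × Fin n) ℝ)
    (hHbar : ∀ k l i j, Hbar (k, i) (l, j) =
      (a k * a l / (m : ℝ) + lam * (if k = l then 1 else 0)) * H k i j)
    (u : Fin n → ℝ)
    (hu : ∑ k, (a k ^ 2 / (m : ℝ)) •
        ((H k * (p • (1 : Matrix (Fin n) (Fin n) ℝ) - lam • H k)⁻¹) *ᵥ u) = u)
    (uk : Fin m → Fin n → ℝ)
    (huk : ∀ k, uk k = (a k / Real.sqrt m) •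
        ((p • (1 : Matrix (Fin n) (Fin n) ℝ) - lam • H k)⁻¹ *ᵥ u))
    (η : Fin m × Fin n → ℝ) (hη : ∀ k i, η (k, i) = uk k i) :
    Hbarᵀ *ᵥ η = p • η := by
  ext ⟨k, i⟩
  have hsymm : ∀ l, (H l).IsSymm := fun l => isHermitian_iff_isSymm.mp (hH l).isHermitian
  have hblock := transpose_mulVec_of_blocks
    (of fun k l => a k * a l / (m : ℝ) + lam * if k = l then 1 else 0) H Hbar hHbar η k
  have hblocks : ∀ l, (fun j => η (l, j)) = uk l := fun l => funext (hη l)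
  simp only [of_apply, hblocks, huk] at hblock
  rw [Pi.smul_apply, hη, huk]
  exact congrFun (hblock.trans
    (sum_smul_transpose_mulVec_inv_eq H hsymm a m lam p (Real.sqrt m) hinv u hu k)) i

/-- Supplement, Lemma 5 (left-eigenvector part): if u satisfies
Σₖ (aₖ²/m)Hₖ(pI − λHₖ)⁻¹ u = u, then the block vector with blocks
uₖ = (aₖ/√m)(pI − λHₖ)⁻¹ u is a left eigenvector (i.e. an eigenvector of H̄ᵀ) of the
block matrix H̄ (whose (k,l) block is (aₖaₗ/m + λδ_{kl})Hₖ) with eigenvalue p. -/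
theorem stmt8 {n m : ℕ} (H : Fin m → Matrix (Fin n) (Fin n) ℝ)
    (hH : ∀ k, (H k).PosSemidef)
    (a : Fin m → ℝ) (lam : ℝ) (hlam : 0 ≤ lam) (p : ℝ)
    (hinv : ∀ k, IsUnit (p • (1 : Matrix (Fin n) (Fin n) ℝ) - lam • H k))
    (Hbar : Matrix (Fin m × Fin n) (Fin m × Fin n) ℝ)
    (hHbar : ∀ k l i j, Hbar (k, i) (l, j) =
      (a k * a l / (m : ℝ) + lam * (if k = l then 1 else 0)) * H k i j)
    (u : Fin n → ℝ)
    (hu : ∑ k, (a k ^ 2 / (m : ℝ)) •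
        ((H k * (p • (1 : Matrix (Fin n) (Fin n) ℝ) - lam • H k)⁻¹) *ᵥ u) = u)
    (uk : Fin m → Fin n → ℝ)
    (huk : ∀ k, uk k = (a k / Real.sqrt m) •
        ((p • (1 : Matrix (Fin n) (Fin n) ℝ) - lam • H k)⁻¹ *ᵥ u))
    (η : Fin m × Fin n → ℝ) (hη : ∀ k i, η (k, i) = uk k i) :
    Hbarᵀ *ᵥ η = p • η :=
  stmt8_general H hH a lam p hinv Hbar hHbar u hu uk huk η hη
end
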